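/- arXiv:1606.05480 — 3 statements merged into one kernel-verified Lean document; each statement's English description precedes it below -/
import Mathlib

section
/- For all positive integers m and n with m < n, the Grundy number of the Cartesian product of complete graphs satisfies Γ(K_m □ K_n) = m + n − 1. -/
open SimpleGraph

/-- First-Fit (greedy) coloring of `G` with respect to the vertex ordering given by the
injective position function `ord` (vertex `u` comes before `v` iff `ord u < ord v`).
Each vertex receives the smallest positive integer not used on earlier neighbors. -/
noncomputable def firstFit {V : Type*} (G : SimpleGraph V) (ord : V → ℕ) : V → ℕ :=
  (InvImage.wf ord Nat.lt_wfRel.wf).fix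
    (fun v ih => sInf {c : ℕ | 1 ≤ c ∧ ∀ u, ∀ h : ord u < ord v, G.Adj u v → ih u h ≠ c})

/-- `FFColors G ord` is the number of colors used by the First-Fit coloring. -/
noncomputable def FFColors {V : Type*} [Fintype V] (G : SimpleGraph V) (ord : V → ℕ) : ℕ :=
  (Finset.univ.image (firstFit G ord)).card

open Classical in
/-- First-Fit coloring of `(G, ord)` subject to the pre-coloring `C₀` on the set `S`:
vertices of `S` keep their pre-assigned colors and are skipped by the scan; every other
vertex receives the smallest positive integer not already assigned (or pre-assigned)
to a neighbor. -/
noncomputable def firstFitWith {V : Type*} (G : SimpleGraph V) (ord : V → ℕ)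
    (S : Set V) (C₀ : V → ℕ) : V → ℕ :=
  (InvImage.wf ord Nat.lt_wfRel.wf).fix
    (fun v ih =>
      if v ∈ S then C₀ v
      else sInf {c : ℕ | 1 ≤ c ∧ (∀ u, G.Adj u v → u ∈ S → C₀ u ≠ c) ∧
        ∀ u, ∀ h : ord u < ord v, G.Adj u v → u ∉ S → ih u h ≠ c})

/-- Position function of the lexicographic order on `V × W` induced by the position
functions `σ` on `V` and `σ'` on `W` (for injective `σ, σ'`: `(u,v)` comes before
`(u',v')` iff `σ u < σ u'`, or `u = u'` and `σ' v < σ' v'`). -/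
noncomputable def lexPos {V W : Type*} [Fintype W] (σ : V → ℕ) (σ' : W → ℕ) : V × W → ℕ :=
  fun p => σ p.1 * (Finset.univ.sup σ' + 1) + σ' p.2

/-- A proper coloring with colors in the positive integers. -/
def IsProperColoring {V : Type*} (G : SimpleGraph V) (C : V → ℕ) : Prop :=
  (∀ v, 1 ≤ C v) ∧ ∀ ⦃u v⦄, G.Adj u v → C u ≠ C v

/-- `D` is a `(C, ord)`-descent: `D = {v} ∪ N` where `C v = y`, `x < y` is a (positive)
color, `N` is the set of neighbors of `v` of color `x`, and every `u ∈ N` comes after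
`v` in the order. -/
def IsDescent {V : Type*} (G : SimpleGraph V) (ord : V → ℕ) (C : V → ℕ) (D : Set V) : Prop :=
  ∃ v x, 1 ≤ x ∧ x < C v ∧
    (∀ u, G.Adj u v → C u = x → ord v < ord u) ∧
    D = insert v {u | G.Adj u v ∧ C u = x}

/-- The Grundy number: the maximum of `FFColors G ord` over all vertex orderings. -/
noncomputable def grundy {V : Type*} [Fintype V] (G : SimpleGraph V) : ℕ :=
  sSup {n | ∃ ord : V → ℕ, Function.Injective ord ∧ FFColors G ord = n}

/-- The independence number of `G`. -/
noncomputable def indepNum {V : Type*} [Fintype V] (G : SimpleGraph V) : ℕ :=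
  sSup {n | ∃ s : Finset V, (∀ u ∈ s, ∀ v ∈ s, ¬ G.Adj u v) ∧ s.card = n}

/-- An `m × n` Latin rectangle: entries in `{1, …, n}`, no repeats in rows or columns. -/
def IsLatinRectangle {m n : ℕ} (R : Fin m → Fin n → ℕ) : Prop :=
  (∀ i j, R i j ∈ Finset.Icc 1 n) ∧ (∀ i, Function.Injective (R i)) ∧
    (∀ j, Function.Injective (fun i => R i j))

/-- `S` is a greedy defining set of the rectangle `R` (cells scanned in lexicographic,
i.e. row-by-row, order): the greedy completion, which skips the cells of `S` (fixed to
their values in `R`) and places in each other cell the smallest positive integer not yet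
appearing in its row or column, reproduces `R`.  This is First-Fit on the rook's graph
`K_m □ K_n` subject to the pre-coloring of `S` by `R`. -/
noncomputable def IsRectGDS {m n : ℕ} (R : Fin m → Fin n → ℕ) (S : Set (Fin m × Fin n)) : Prop :=
  firstFitWith ((⊤ : SimpleGraph (Fin m)).boxProd (⊤ : SimpleGraph (Fin n)))
    (lexPos Fin.val Fin.val) S (fun p => R p.1 p.2) = fun p => R p.1 p.2

/-- The Latin square `L_k` of order `2^k`: the entry in row `i`, column `j` is
`2^k - (i XOR j)`; equivalently the `k`-fold tensor product of `[[2,1],[1,2]]`. -/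
def Lsquare (k : ℕ) : Fin (2 ^ k) → Fin (2 ^ k) → ℕ :=
  fun i j => 2 ^ k - (i.val ^^^ j.val)

section GrundyAux

lemma mul_add_lt_aux {N a b c d : ℕ} (hc : c < N) (h : a < b) :
    a * N + c < b * N + d := by
  have h1 : (a + 1) * N ≤ b * N := Nat.mul_le_mul_right N (by omega)
  have h2 : (a + 1) * N = a * N + N := by ring
  linarith

lemma mul_add_inj_aux {N a b c d : ℕ} (hc : c < N) (hd : d < N)
    (h : a * N + c = b * N + d) : a = b ∧ c = d := by
  rcases lt_trichotomy a b with h' | h' | h'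
  · exact absurd h (Nat.ne_of_lt (mul_add_lt_aux hc h'))
  · subst h'
    exact ⟨rfl, Nat.add_left_cancel h⟩
  · exact absurd h (Nat.ne_of_gt (mul_add_lt_aux hd h'))

lemma firstFit_def {V : Type*} (G : SimpleGraph V) (ord : V → ℕ) (v : V) :
    firstFit G ord v =
      sInf {c : ℕ | 1 ≤ c ∧ ∀ u, ord u < ord v → G.Adj u v → firstFit G ord u ≠ c} := by
  conv_lhs => rw [firstFit, WellFounded.fix_eq]
  rfl

lemma firstFit_mem {V : Type*} [Fintype V] (G : SimpleGraph V) (ord : V → ℕ) (v : V) :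
    1 ≤ firstFit G ord v ∧
      ∀ u, ord u < ord v → G.Adj u v → firstFit G ord u ≠ firstFit G ord v := by
  have hne : ({c : ℕ | 1 ≤ c ∧ ∀ u, ord u < ord v → G.Adj u v →
      firstFit G ord u ≠ c}).Nonempty := by
    refine ⟨Finset.univ.sup (firstFit G ord) + 1, by omega, fun u _ _ => ?_⟩
    have : firstFit G ord u ≤ Finset.univ.sup (firstFit G ord) :=
      Finset.le_sup (Finset.mem_univ u)
    omega
  have h := Nat.sInf_mem hne
  rw [← firstFit_def] at h
  exact h

/-- First-Fit reproduces any Grundy coloring when vertices are scanned in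
nondecreasing color order. -/
lemma ff_eq_of_grundy {V : Type*} (G : SimpleGraph V) (ord C : V → ℕ)
    (hord : ∀ u v, C u < C v → ord u < ord v)
    (hpos : ∀ v, 1 ≤ C v)
    (hproper : ∀ ⦃u v⦄, G.Adj u v → C u ≠ C v)
    (hgrundy : ∀ v x, 1 ≤ x → x < C v → ∃ u, G.Adj u v ∧ C u = x) :
    firstFit G ord = C := by
  funext v
  refine (InvImage.wf ord Nat.lt_wfRel.wf).induction
    (C := fun v => firstFit G ord v = C v) v ?_
  intro v ih
  rw [firstFit_def]
  have hmem : C v ∈ {c : ℕ | 1 ≤ c ∧ ∀ u, ord u < ord v → G.Adj u v →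
      firstFit G ord u ≠ c} :=
    ⟨hpos v, fun u hu hadj => by rw [ih u hu]; exact hproper hadj⟩
  refine le_antisymm (Nat.sInf_le hmem) ?_
  by_contra hlt
  push_neg at hlt
  have hin := Nat.sInf_mem ⟨_, hmem⟩
  obtain ⟨u, hadj, hCu⟩ := hgrundy v _ hin.1 hlt
  have ho : ord u < ord v := hord u v (by omega)
  exact hin.2 u ho hadj (by rw [ih u ho, hCu])

/-- Any First-Fit coloring of `K_m □ K_n` uses at most `m + n - 1` colors. -/
lemma ffcolors_boxProd_le (m n : ℕ) (ord : Fin m × Fin n → ℕ) :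
    FFColors ((⊤ : SimpleGraph (Fin m)).boxProd (⊤ : SimpleGraph (Fin n))) ord ≤ m + n - 1 := by
  classical
  set G := (⊤ : SimpleGraph (Fin m)).boxProd (⊤ : SimpleGraph (Fin n)) with hG
  have himg : Finset.univ.image (firstFit G ord) ⊆ Finset.Icc 1 (m + n - 1) := by
    intro c hc
    simp only [Finset.mem_image, Finset.mem_univ, true_and] at hc
    obtain ⟨⟨i, j⟩, rfl⟩ := hc
    have hm : 0 < m := i.pos
    have hn : 0 < n := j.pos
    set T : Finset ℕ :=
      ((Finset.univ.erase i).image fun i' => firstFit G ord (i', j)) ∪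
        ((Finset.univ.erase j).image fun j' => firstFit G ord (i, j')) with hT
    have hTcard : T.card ≤ (m - 1) + (n - 1) := by
      refine le_trans (Finset.card_union_le _ _) ?_
      have h1 : ((Finset.univ.erase i).image fun i' => firstFit G ord (i', j)).card ≤ m - 1 := by
        refine le_trans Finset.card_image_le ?_
        rw [Finset.card_erase_of_mem (Finset.mem_univ i), Finset.card_univ, Fintype.card_fin]
      have h2 : ((Finset.univ.erase j).image fun j' => firstFit G ord (i, j')).card ≤ n - 1 := by
        refine le_trans Finset.card_image_le ?_
        rw [Finset.card_erase_of_mem (Finset.mem_univ j), Finset.card_univ, Fintype.card_fin]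
      omega
    have hfree : ∃ c₀ ∈ Finset.Icc 1 (m + n - 1), c₀ ∉ T := by
      by_contra h
      push_neg at h
      have hsub : Finset.Icc 1 (m + n - 1) ⊆ T := fun x hx => h x hx
      have := Finset.card_le_card hsub
      rw [Nat.card_Icc] at this
      omega
    obtain ⟨c₀, hc₀, hc₀T⟩ := hfree
    rw [Finset.mem_Icc] at hc₀
    have hc₀S : c₀ ∈ {c : ℕ | 1 ≤ c ∧ ∀ u, ord u < ord (i, j) → G.Adj u (i, j) →
        firstFit G ord u ≠ c} := by
      refine ⟨hc₀.1, fun u _ hadj heq => hc₀T ?_⟩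
      rw [← heq]
      obtain ⟨i', j'⟩ := u
      rw [hG, SimpleGraph.boxProd_adj] at hadj
      rcases hadj with ⟨h1, h2⟩ | ⟨h1, h2⟩
      · have h2' : j' = j := h2
        subst h2'
        exact Finset.mem_union_left _ (Finset.mem_image.2
          ⟨i', Finset.mem_erase.2 ⟨h1.ne, Finset.mem_univ _⟩, rfl⟩)
      · have h2' : i' = i := h2
        subst h2'
        exact Finset.mem_union_right _ (Finset.mem_image.2
          ⟨j', Finset.mem_erase.2 ⟨h1.ne, Finset.mem_univ _⟩, rfl⟩)
    have hle : firstFit G ord (i, j) ≤ c₀ := by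
      rw [firstFit_def]
      exact Nat.sInf_le hc₀S
    exact Finset.mem_Icc.2 ⟨(firstFit_mem G ord (i, j)).1, le_trans hle hc₀.2⟩
  calc FFColors G ord ≤ (Finset.Icc 1 (m + n - 1)).card := Finset.card_le_card himg
    _ = m + n - 1 := by rw [Nat.card_Icc]; omega

/-- The witness Grundy coloring of `K_m □ K_n` (for `m < n`) achieving `m + n - 1`. -/
def myC (m n : ℕ) (p : Fin m × Fin n) : ℕ :=
  if p.2.val < n - 1 then
    (if p.1.val + p.2.val < n - 1 then p.1.val + p.2.val + 1 else p.1.val + p.2.val + 2 - n)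
  else if p.1.val = 0 then m + n - 1 else (n - 1) + p.1.val

lemma myC_pos (m n : ℕ) (hm : 0 < m) (p : Fin m × Fin n) : 1 ≤ myC m n p := by
  unfold myC; split_ifs <;> omega

lemma myC_proper (m n : ℕ) (hm : 0 < m) (hmn : m < n) :
    ∀ ⦃u v : Fin m × Fin n⦄,
      (((⊤ : SimpleGraph (Fin m)).boxProd (⊤ : SimpleGraph (Fin n))).Adj u v) →
      myC m n u ≠ myC m n v := by
  rintro ⟨i', j'⟩ ⟨i, j⟩ hadj
  rw [SimpleGraph.boxProd_adj] at hadj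
  have hi := i.isLt; have hi' := i'.isLt; have hj := j.isLt; have hj' := j'.isLt
  rcases hadj with ⟨h1, h2⟩ | ⟨h1, h2⟩
  · have hne : i'.val ≠ i.val := fun h => h1.ne (Fin.ext h)
    simp only [Prod.fst, Prod.snd] at h2 ⊢
    subst h2
    unfold myC
    simp only
    split_ifs <;> omega
  · have hne : j'.val ≠ j.val := fun h => h1.ne (Fin.ext h)
    simp only [Prod.fst, Prod.snd] at h2 ⊢
    subst h2
    unfold myC
    simp only
    split_ifs <;> omega

lemma row_witness (m n : ℕ) (hm : 0 < m) (hmn : m < n) (i : Fin m) (x : ℕ)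
    (hx1 : 1 ≤ x) (hx2 : x ≤ n - 1) :
    ∃ j' : Fin n, j'.val < n - 1 ∧ myC m n (i, j') = x := by
  have hi := i.isLt
  refine ⟨⟨if i.val + 1 ≤ x then x - 1 - i.val else x - 1 + (n - 1) - i.val, by
    split_ifs <;> omega⟩, ?_, ?_⟩
  · simp only
    split_ifs <;> omega
  · unfold myC
    simp only
    split_ifs <;> omega

lemma myC_grundy (m n : ℕ) (hm : 0 < m) (hmn : m < n) :
    ∀ (v : Fin m × Fin n) (x : ℕ), 1 ≤ x → x < myC m n v →
      ∃ u, (((⊤ : SimpleGraph (Fin m)).boxProd (⊤ : SimpleGraph (Fin n))).Adj u v) ∧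
        myC m n u = x := by
  rintro ⟨i, j⟩ x hx1 hx2
  have hi := i.isLt; have hj := j.isLt
  by_cases hxr : x ≤ n - 1
  · obtain ⟨j', hj'1, hj'2⟩ := row_witness m n hm hmn i x hx1 hxr
    refine ⟨(i, j'), ?_, hj'2⟩
    rw [SimpleGraph.boxProd_adj]
    right
    refine ⟨?_, rfl⟩
    rw [SimpleGraph.top_adj]
    intro h
    have h' : j' = j := h
    rw [h'] at hj'2
    omega
  · have hcv : myC m n (i, j) = if j.val < n - 1 then
        (if i.val + j.val < n - 1 then i.val + j.val + 1 else i.val + j.val + 2 - n)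
      else if i.val = 0 then m + n - 1 else (n - 1) + i.val := rfl
    have hcb : ¬ j.val < n - 1 := by
      by_contra h
      rw [hcv] at hx2
      simp only [if_pos h] at hx2
      split_ifs at hx2 <;> omega
    have hjval : j.val = n - 1 := by omega
    have hxlt : x < m + n - 1 := by
      rw [hcv] at hx2
      simp only [if_neg hcb] at hx2
      split_ifs at hx2 <;> omega
    set i' : ℕ := x - (n - 1) with hi'
    have hi'1 : 1 ≤ i' := by omega
    have hi'm : i' < m := by omega
    have hi'ne : i' ≠ i.val := by
      intro h
      rw [hcv] at hx2
      simp only [if_neg hcb] at hx2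
      split_ifs at hx2 <;> omega
    refine ⟨(⟨i', hi'm⟩, j), ?_, ?_⟩
    · rw [SimpleGraph.boxProd_adj]
      left
      exact ⟨by rw [SimpleGraph.top_adj]; exact fun h => hi'ne (congrArg Fin.val h), rfl⟩
    · unfold myC
      simp only [if_neg hcb]
      rw [if_neg (by omega : ¬ i' = 0)]
      omega

lemma myC_image (m n : ℕ) (hm : 0 < m) (hmn : m < n) :
    Finset.univ.image (myC m n) = Finset.Icc 1 (m + n - 1) := by
  ext c
  simp only [Finset.mem_image, Finset.mem_univ, true_and, Finset.mem_Icc]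
  constructor
  · rintro ⟨⟨i, j⟩, rfl⟩
    have hi := i.isLt; have hj := j.isLt
    unfold myC
    simp only
    split_ifs <;> omega
  · rintro ⟨h1, h2⟩
    by_cases hc : c ≤ n - 1
    · obtain ⟨j', _, hj'⟩ := row_witness m n hm hmn ⟨0, hm⟩ c h1 hc
      exact ⟨(⟨0, hm⟩, j'), hj'⟩
    · by_cases hc2 : c = m + n - 1
      · refine ⟨(⟨0, hm⟩, ⟨n - 1, by omega⟩), ?_⟩
        unfold myC
        simp only [Fin.val_mk]
        split_ifs <;> omega
      · refine ⟨(⟨c - (n - 1), by omega⟩, ⟨n - 1, by omega⟩), ?_⟩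
        unfold myC
        simp only [Fin.val_mk]
        split_ifs <;> omega

/-- The scan order: sort by color (ties broken lexicographically). -/
def myOrd (m n : ℕ) (p : Fin m × Fin n) : ℕ :=
  myC m n p * (m * n) + (p.1.val * n + p.2.val)

lemma e_lt (m n : ℕ) (p : Fin m × Fin n) : p.1.val * n + p.2.val < m * n := by
  have h1 : (p.1.val + 1) * n ≤ m * n := Nat.mul_le_mul_right n (by omega)
  have h2 : (p.1.val + 1) * n = p.1.val * n + n := by ring
  have h3 := p.2.isLt
  linarith

lemma myOrd_injective (m n : ℕ) : Function.Injective (myOrd m n) := by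
  intro p q h
  obtain ⟨h1, h2⟩ := mul_add_inj_aux (e_lt m n p) (e_lt m n q) h
  obtain ⟨h3, h4⟩ := mul_add_inj_aux p.2.isLt q.2.isLt h2
  exact Prod.ext (Fin.ext h3) (Fin.ext h4)

lemma myOrd_mono (m n : ℕ) : ∀ u v : Fin m × Fin n,
    myC m n u < myC m n v → myOrd m n u < myOrd m n v :=
  fun u v h => mul_add_lt_aux (e_lt m n u) h

end GrundyAux

/-- For positive integers `m < n`, `Γ(K_m □ K_n) = m + n - 1`. -/
theorem grundy_complete_boxProd_of_lt (m n : ℕ) (hm : 0 < m) (hmn : m < n) :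
    grundy ((⊤ : SimpleGraph (Fin m)).boxProd (⊤ : SimpleGraph (Fin n))) = m + n - 1 := by
  classical
  set G := (⊤ : SimpleGraph (Fin m)).boxProd (⊤ : SimpleGraph (Fin n)) with hG
  have hub : ∀ k ∈ {k | ∃ ord : Fin m × Fin n → ℕ,
      Function.Injective ord ∧ FFColors G ord = k}, k ≤ m + n - 1 := by
    rintro k ⟨ord, -, rfl⟩
    exact ffcolors_boxProd_le m n ord
  have hmem : (m + n - 1) ∈ {k | ∃ ord : Fin m × Fin n → ℕ,
      Function.Injective ord ∧ FFColors G ord = k} := by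
    refine ⟨myOrd m n, myOrd_injective m n, ?_⟩
    rw [FFColors, ff_eq_of_grundy G (myOrd m n) (myC m n) (myOrd_mono m n)
      (myC_pos m n hm) (myC_proper m n hm hmn) (myC_grundy m n hm hmn),
      myC_image m n hm hmn, Nat.card_Icc]
    omega
  rw [grundy]
  exact le_antisymm (csSup_le ⟨_, hmem⟩ hub) (le_csSup ⟨m + n - 1, hub⟩ hmem)
end

section
/- For any finite simple graph G with a linear order σ on V(G), the First-Fit coloring of G□G with respect to the lexicographic order induced by σ on both factors satisfies FF(G□G, lex) ≤ 2Γ(G) − 2, provided Γ(G) ≥ 2 (equivalently, G has at least one edge). -/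
open SimpleGraph

/-!
First-Fit in the lexicographic order on `G □ H` colours `(u, v)` with the Nim-sum of the
First-Fit colours of `u` and `v` (counting colours from `0`): the earlier neighbours of `(u, v)`
are `(u', v)` with `u'` earlier than `u` and `(u, v')` with `v'` earlier than `v`, and the mex of
`{a' ^^^ b : a' ∈ A} ∪ {a ^^^ b' : b' ∈ B}` is `a ^^^ b` when `A ⊇ [0, a)` avoids `a` and
`B ⊇ [0, b)` avoids `b`. For `G = H` both coordinates use colours `0, …, Γ(G) - 1`, and the
Nim-sum of two distinct ones is at most their sum, at most `2Γ(G) - 3`.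
-/

theorem Nat.xor_le_add (a b : ℕ) : a ^^^ b ≤ a + b := by
  induction a using Nat.strong_induction_on generalizing b with
  | _ a ih =>
    rcases Nat.eq_zero_or_pos a with rfl | ha
    · simp
    · have hmod : (a ^^^ b) % 2 = (a + b) % 2 := Nat.xor_mod_two_eq
      have hdiv : (a ^^^ b) / 2 = a / 2 ^^^ b / 2 := Nat.xor_div_two
      have := ih (a / 2) (Nat.div_lt_self ha one_lt_two) (b / 2)
      omega

theorem Nat.xor_add_one_le {n a b : ℕ} (hn : 2 ≤ n) (ha : a < n) (hb : b < n) :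
    (a ^^^ b) + 1 ≤ 2 * n - 2 := by
  rcases eq_or_ne a b with rfl | hab
  · simp only [Nat.xor_self]
    omega
  · have := Nat.xor_le_add a b
    omega

section lexPos

variable {V W : Type*} [Fintype W] (σ : V → ℕ) (τ : W → ℕ)

theorem lexPos_lt_lexPos_left_iff {u u' : V} {v : W} :
    lexPos σ τ (u', v) < lexPos σ τ (u, v) ↔ σ u' < σ u := by
  simp only [lexPos, add_lt_add_iff_right]
  exact Nat.mul_lt_mul_right (Nat.succ_pos _)

theorem lexPos_lt_lexPos_right_iff {u : V} {v v' : W} :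
    lexPos σ τ (u, v') < lexPos σ τ (u, v) ↔ τ v' < τ v := by
  simp only [lexPos, add_lt_add_iff_left]

end lexPos

section firstFit

variable {V : Type*} (G : SimpleGraph V) (ord : V → ℕ)

theorem firstFit_eq (v : V) :
    firstFit G ord v = sInf {c : ℕ | 1 ≤ c ∧
      ∀ u, ord u < ord v → G.Adj u v → firstFit G ord u ≠ c} := by
  rw [firstFit, WellFounded.fix_eq]

theorem firstFit_eq_of_mex {v : V} {c : ℕ} (hc : 1 ≤ c)
    (havoid : ∀ u, ord u < ord v → G.Adj u v → firstFit G ord u ≠ c)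
    (hattain : ∀ t, 1 ≤ t → t < c → ∃ u, ord u < ord v ∧ G.Adj u v ∧ firstFit G ord u = t) :
    firstFit G ord v = c := by
  rw [firstFit_eq]
  refine le_antisymm (Nat.sInf_le ⟨hc, havoid⟩) (le_csInf ⟨c, hc, havoid⟩ ?_)
  rintro t ⟨ht, htavoid⟩
  by_contra! hlt
  obtain ⟨u, hu, hadj, hut⟩ := hattain t ht hlt
  exact htavoid u hu hadj hut

theorem exists_firstFit_eq_of_lt {v : V} {t : ℕ} (ht : 1 ≤ t) (hlt : t < firstFit G ord v) :
    ∃ u, ord u < ord v ∧ G.Adj u v ∧ firstFit G ord u = t := by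
  by_contra! hc
  have := Nat.sInf_le (s := {c : ℕ | 1 ≤ c ∧
    ∀ u, ord u < ord v → G.Adj u v → firstFit G ord u ≠ c}) ⟨ht, hc⟩
  rw [← firstFit_eq] at this
  omega

theorem firstFit_spec [Finite V] (v : V) :
    1 ≤ firstFit G ord v ∧
      ∀ u, ord u < ord v → G.Adj u v → firstFit G ord u ≠ firstFit G ord v := by
  obtain ⟨b, hb⟩ := (Set.finite_range (firstFit G ord)).bddAbove
  have hne : {c : ℕ | 1 ≤ c ∧
      ∀ u, ord u < ord v → G.Adj u v → firstFit G ord u ≠ c}.Nonempty :=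
    ⟨b + 1, by omega, fun u _ _ => (hb ⟨u, rfl⟩).trans_lt b.lt_succ_self |>.ne⟩
  rw [firstFit_eq G ord v]
  exact Nat.sInf_mem hne

theorem firstFit_le_FFColors [Fintype V] (v : V) : firstFit G ord v ≤ FFColors G ord := by
  have hsub : Finset.Icc 1 (firstFit G ord v) ⊆ Finset.univ.image (firstFit G ord) := by
    intro t ht
    rw [Finset.mem_Icc] at ht
    rcases ht.2.lt_or_eq with hlt | rfl
    · obtain ⟨u, -, -, hu⟩ := exists_firstFit_eq_of_lt G ord ht.1 hlt
      exact hu ▸ Finset.mem_image_of_mem _ (Finset.mem_univ u)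
    · exact Finset.mem_image_of_mem _ (Finset.mem_univ v)
  simpa [FFColors] using Finset.card_le_card hsub

theorem FFColors_le_grundy [Fintype V] (hord : Function.Injective ord) :
    FFColors G ord ≤ grundy G := by
  refine le_csSup ⟨Fintype.card V, ?_⟩ ⟨ord, hord, rfl⟩
  rintro _ ⟨o, -, rfl⟩
  exact Finset.card_image_le.trans_eq Finset.card_univ

theorem FFColors_le_of_forall_le [Fintype V] {m : ℕ} (h : ∀ v, firstFit G ord v ≤ m) :
    FFColors G ord ≤ m := by
  calc FFColors G ord ≤ (Finset.Icc 1 m).card :=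
        Finset.card_le_card <| Finset.image_subset_iff.2 fun v _ =>
          Finset.mem_Icc.2 ⟨(firstFit_spec G ord v).1, h v⟩
    _ = m := by simp

end firstFit

theorem firstFit_boxProd_lexPos {V W : Type*} [Finite V] [Fintype W]
    (G : SimpleGraph V) (H : SimpleGraph W) (σ : V → ℕ) (τ : W → ℕ) (p : V × W) :
    firstFit (G □ H) (lexPos σ τ) p = (firstFit G σ p.1 - 1 ^^^ firstFit H τ p.2 - 1) + 1 := by
  induction p using (InvImage.wf (lexPos σ τ) Nat.lt_wfRel.wf).induction with
  | _ p ih =>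
  obtain ⟨u, v⟩ := p
  dsimp only
  have hu := firstFit_spec G σ u
  have hv := firstFit_spec H τ v
  apply firstFit_eq_of_mex _ _ (Nat.succ_pos _)
  · rintro ⟨u', v'⟩ hlt hadj
    rw [ih _ hlt]
    dsimp only
    rcases boxProd_adj.mp hadj with ⟨hGadj, rfl⟩ | ⟨hHadj, rfl⟩
    · have hne := hu.2 u' ((lexPos_lt_lexPos_left_iff σ τ).1 hlt) hGadj
      have := (firstFit_spec G σ u').1
      intro h
      have := Nat.xor_left_inj.mp (Nat.succ_injective h)
      omega
    · have hne := hv.2 v' ((lexPos_lt_lexPos_right_iff σ τ).1 hlt) hHadj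
      have := (firstFit_spec H τ v').1
      intro h
      have := Nat.xor_right_inj.mp (Nat.succ_injective h)
      omega
  · intro t ht hlt
    rcases Nat.lt_xor_cases (show t - 1 < _ ^^^ _ from Nat.sub_lt_right_of_lt_add ht hlt) with h | h
    · obtain ⟨u', hlt', hadj, hcol⟩ := exists_firstFit_eq_of_lt G σ
        (v := u) (t := (t - 1 ^^^ firstFit H τ v - 1) + 1) (Nat.succ_pos _) (by omega)
      have hlex := (lexPos_lt_lexPos_left_iff σ τ (v := v)).2 hlt'
      refine ⟨(u', v), hlex, boxProd_adj.2 (Or.inl ⟨hadj, rfl⟩), ?_⟩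
      rw [ih _ hlex, hcol]
      simp only [Nat.add_sub_cancel, xor_cancel_right]
      omega
    · obtain ⟨v', hlt', hadj, hcol⟩ := exists_firstFit_eq_of_lt H τ
        (v := v) (t := (t - 1 ^^^ firstFit G σ u - 1) + 1) (Nat.succ_pos _) (by omega)
      have hlex := (lexPos_lt_lexPos_right_iff σ τ (u := u)).2 hlt'
      refine ⟨(u, v'), hlex, boxProd_adj.2 (Or.inr ⟨hadj, rfl⟩), ?_⟩
      rw [ih _ hlex, hcol]
      simp only [Nat.add_sub_cancel, xor_xor_cancel_comm_assoc]
      omega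

/-- If `Γ(G) ≥ 2` then `FF(G □ G, lex) ≤ 2Γ(G) - 2`. -/
theorem FF_boxProd_self_lex_le {V : Type*} [Fintype V]
    (G : SimpleGraph V) (σ : V → ℕ) (hσ : Function.Injective σ)
    (hΓ : 2 ≤ grundy G) :
    FFColors (G.boxProd G) (lexPos σ σ) ≤ 2 * grundy G - 2 := by
  have hcolor_lt : ∀ v, firstFit G σ v - 1 < grundy G := fun v => by
    have hle := (firstFit_le_FFColors G σ v).trans (FFColors_le_grundy G σ hσ)
    have hpos := (firstFit_spec G σ v).1
    omega
  refine FFColors_le_of_forall_le _ _ fun p => ?_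
  rw [firstFit_boxProd_lexPos]
  exact Nat.xor_add_one_le hΓ (hcolor_lt p.1) (hcolor_lt p.2)
end

section
/- For every positive integer n, FF(K_n□K_n, lex) = 2^⌈log₂ n⌉, where K_n□K_n carries the lexicographic order induced by the natural order on the vertices 0,1,…,n−1 of each factor K_n. -/
open SimpleGraph

/-! First-Fit in the lexicographic order colors the cell `(i, j)` of `K_n □ K_n` with
`(i ^^^ j) + 1`. This coloring is proper because XOR with a fixed value is injective, and it
is greedy because `d < i ^^^ j` forces `d ^^^ j < i` or `d ^^^ i < j`, i.e. the smaller color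
`d + 1` already sits on an earlier cell of column `j` or of row `i`. The values `i ^^^ j` with
`i, j < n` fill exactly `[0, 2 ^ ⌈log₂ n⌉)`. -/

theorem firstFit_eq_sInf {V : Type*} (G : SimpleGraph V) (ord : V → ℕ) (v : V) :
    firstFit G ord v =
      sInf {c | 1 ≤ c ∧ ∀ u, ord u < ord v → G.Adj u v → firstFit G ord u ≠ c} := by
  rw [firstFit, WellFounded.fix_eq]

theorem firstFit_eq_of_isLeast {V : Type*} {G : SimpleGraph V} {ord : V → ℕ} {C : V → ℕ}
    (hC : ∀ v, IsLeast {c | 1 ≤ c ∧ ∀ u, ord u < ord v → G.Adj u v → C u ≠ c} (C v)) :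
    firstFit G ord = C := by
  funext v
  induction v using (InvImage.wf ord Nat.lt_wfRel.wf).induction with
  | h v ih =>
    rw [firstFit_eq_sInf, ← (hC v).csInf_eq]
    exact congrArg sInf <| Set.ext fun c => and_congr_right fun _ =>
      forall_congr' fun u => imp_congr_right fun hu => by rw [ih u hu]

theorem lexPos_fin_val {n : ℕ} (p : Fin n × Fin n) :
    lexPos Fin.val Fin.val p = p.1.val * n + p.2.val := by
  have hn := p.1.pos
  have hsup : Finset.univ.sup (Fin.val : Fin n → ℕ) + 1 = n := by
    refine le_antisymm (Nat.succ_le_of_lt ?_) ?_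
    · exact (Finset.sup_lt_iff hn).2 fun i _ => i.isLt
    · have hlast := Finset.le_sup (f := (Fin.val : Fin n → ℕ))
        (Finset.mem_univ ⟨n - 1, by omega⟩)
      simp only at hlast
      omega
  rw [lexPos, hsup]

theorem Nat.two_pow_xor_of_lt {i b : ℕ} (hb : b < 2 ^ i) : 2 ^ i ^^^ b = 2 ^ i + b := by
  apply Nat.eq_of_testBit_eq
  intro j
  have hbit := Nat.testBit_two_pow_mul_add (j := j) 1 hb
  rw [mul_one] at hbit
  rw [hbit, Nat.testBit_xor, Nat.testBit_two_pow]
  rcases lt_trichotomy j i with h | rfl | h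
  · simp [h, h.ne']
  · simp [Nat.testBit_lt_two_pow hb]
  · simp [h.ne, Nat.not_lt.2 h.le,
      Nat.testBit_lt_two_pow (Nat.one_lt_two_pow (Nat.sub_ne_zero_of_lt h)),
      Nat.testBit_lt_two_pow (hb.trans_le (Nat.pow_le_pow_right two_pos h.le))]

theorem firstFit_boxProd_top_lexPos (n : ℕ) :
    firstFit ((⊤ : SimpleGraph (Fin n)).boxProd (⊤ : SimpleGraph (Fin n)))
      (lexPos Fin.val Fin.val) = fun p : Fin n × Fin n => (p.1.val ^^^ p.2.val) + 1 := by
  refine firstFit_eq_of_isLeast fun p => ⟨⟨le_add_self, ?_⟩, ?_⟩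
  · rintro ⟨a, b⟩ - hadj heq
    obtain ⟨hne, rfl⟩ | ⟨hne, rfl⟩ := boxProd_adj.1 hadj
    · exact (top_adj _ _).1 hne (Fin.ext (Nat.xor_left_inj.1 (Nat.add_right_cancel heq)))
    · exact (top_adj _ _).1 hne (Fin.ext (Nat.xor_right_inj.1 (Nat.add_right_cancel heq)))
  · rintro c ⟨hc, hfree⟩
    obtain ⟨i, j⟩ := p
    obtain ⟨d, rfl⟩ := Nat.exists_eq_add_of_le' hc
    by_contra! hlt
    rcases Nat.lt_xor_cases (Nat.lt_of_add_lt_add_right hlt) with h | h <;> dsimp only at h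
    · refine hfree (⟨d ^^^ j, h.trans i.isLt⟩, j) ?_ ?_ (by simp)
      · simp only [lexPos_fin_val]
        have := Nat.mul_lt_mul_of_pos_right h i.pos
        omega
      · exact boxProd_adj.2 (.inl ⟨(top_adj _ _).2 (Fin.ne_of_val_ne h.ne), rfl⟩)
    · refine hfree (i, ⟨d ^^^ i, h.trans j.isLt⟩) ?_ ?_ (by simp [Nat.xor_comm d])
      · simp only [lexPos_fin_val]
        omega
      · exact boxProd_adj.2 (.inr ⟨(top_adj _ _).2 (Fin.ne_of_val_ne h.ne), rfl⟩)

theorem image_xor_fin_eq_range {n : ℕ} (hn : 0 < n) :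
    Finset.univ.image (fun p : Fin n × Fin n => p.1.val ^^^ p.2.val) =
      Finset.range (2 ^ Nat.clog 2 n) := by
  have hle := Nat.le_pow_clog one_lt_two n
  ext x
  simp only [Finset.mem_image, Finset.mem_univ, true_and, Finset.mem_range]
  constructor
  · rintro ⟨p, rfl⟩
    exact Nat.xor_lt_two_pow (p.1.isLt.trans_le hle) (p.2.isLt.trans_le hle)
  intro hx
  by_cases hxn : x < n
  · exact ⟨(⟨0, hn⟩, ⟨x, hxn⟩), Nat.zero_xor x⟩
  have hn2 : 1 < n := by
    by_contra h
    obtain rfl : n = 1 := by omega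
    rw [Nat.clog_one_right, pow_zero] at hx
    omega
  -- with `m = 2 ^ k = 2 ^ (clog n - 1)` we have `m < n ≤ x < 2 * m`, so `x = m ^^^ (x - m)`
  have hm := Nat.pow_pred_clog_lt_self one_lt_two hn2
  obtain ⟨k, hk⟩ : ∃ k, Nat.clog 2 n = k + 1 :=
    ⟨_, (Nat.succ_pred_eq_of_pos (Nat.clog_pos one_lt_two hn2)).symm⟩
  rw [hk, Nat.pred_succ] at hm
  rw [hk, pow_succ] at hx
  refine ⟨(⟨2 ^ k, hm⟩, ⟨x - 2 ^ k, by omega⟩), ?_⟩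
  dsimp only
  rw [Nat.two_pow_xor_of_lt (by omega)]
  omega

/-- For every positive integer `n`,
`FF(K_n □ K_n, lex) = 2 ^ ⌈log₂ n⌉`. -/
theorem FF_complete_boxProd_self_lex (n : ℕ) (hn : 0 < n) :
    FFColors ((⊤ : SimpleGraph (Fin n)).boxProd (⊤ : SimpleGraph (Fin n)))
      (lexPos Fin.val Fin.val) = 2 ^ Nat.clog 2 n := by
  have himage : Finset.univ.image (fun p : Fin n × Fin n => (p.1.val ^^^ p.2.val) + 1) =
      (Finset.range (2 ^ Nat.clog 2 n)).image (· + 1) := by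
    rw [← image_xor_fin_eq_range hn, Finset.image_image]
    rfl
  rw [FFColors, firstFit_boxProd_top_lexPos, himage,
    Finset.card_image_of_injective _ (add_left_injective 1), Finset.card_range]
end
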